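/- There exist N ≥ 1 and subspaces E^s, E^u of ℝ³ with dim E^s = 2, dim E^u = 1, A(E^s) = E^s, A(E^u) = E^u, E^s ∩ E^u = {0} and E^s + E^u = ℝ³, such that ‖A^N v‖ ≤ (1/3)‖v‖ for all v ∈ E^s and ‖A^(−N) v‖ ≤ (1/3)‖v‖ for all v ∈ E^u. -/

import Mathlib

/-!
Let `L > 1` be the real root of `x³ = x² + 1`, the characteristic polynomial of `A`. Then
`u = (L², 1, L)` spans the unstable line (`A u = L u`), and the stable plane is the kernel of the
linear form given by the left eigenvector `(L², L, 1)`. On the stable plane, `A` rescales by `1 / L`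
a quadratic form that is positive definite there, so by compactness of its unit circle
`‖Aⁿ v‖² ≤ C L⁻ⁿ ‖v‖²`; on the unstable line, `A⁻¹` rescales `‖·‖²` by `L⁻²`. Both bounds drop
below `1/3` for large `n`.
-/

/-- The matrix with rows `(1,1,0)`, `(0,0,1)`, `(1,0,0)`, with real entries. -/
def Areal : Matrix (Fin 3) (Fin 3) ℝ := !![1, 1, 0; 0, 0, 1; 1, 0, 0]

/-- The linear automorphism of Euclidean `ℝ³` given by the matrix `A`. -/
noncomputable def TA : EuclideanSpace ℝ (Fin 3) →ₗ[ℝ] EuclideanSpace ℝ (Fin 3) :=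
  Matrix.toEuclideanLin Areal

open Set Filter Topology

theorem apply_iterate_eq_pow_mul {α M : Type*} [Monoid M] {Q : α → M} {T : α → α} {s : Set α}
    (hT : MapsTo T s s) {r : M} (hQT : ∀ v ∈ s, Q (T v) = r * Q v) (n : ℕ) {v : α}
    (hv : v ∈ s) : Q (T^[n] v) = r ^ n * Q v := by
  induction n with
  | zero => simp
  | succ n ih =>
    rw [Function.iterate_succ_apply', hQT _ (hT.iterate n hv), ih, pow_succ', mul_assoc]

section AdaptedForm

variable {E : Type*} [NormedAddCommGroup E] [NormedSpace ℝ E] [FiniteDimensional ℝ E]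
  {Q : E → ℝ}

theorem exists_mul_norm_sq_le_and_le_mul_norm_sq (p : Submodule ℝ E) (hQc : Continuous Q)
    (hQ : ∀ (t : ℝ) v, Q (t • v) = t ^ 2 * Q v) (hpos : ∀ v ∈ p, v ≠ 0 → 0 < Q v) :
    ∃ c > 0, ∃ C, ∀ v ∈ p, c * ‖v‖ ^ 2 ≤ Q v ∧ Q v ≤ C * ‖v‖ ^ 2 := by
  have hK : IsCompact (Metric.sphere (0 : E) 1 ∩ p) :=
    (isCompact_sphere 0 1).inter_right p.closed_of_finiteDimensional
  obtain ⟨c, hc, hcK⟩ := hK.exists_forall_le' hQc.continuousOn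
    (fun w hw ↦ hpos w hw.2 (ne_zero_of_mem_sphere one_ne_zero ⟨w, hw.1⟩))
  obtain ⟨C, hCK⟩ := hK.bddAbove_image hQc.continuousOn
  refine ⟨c, hc, C, fun v hv ↦ ?_⟩
  rcases eq_or_ne v 0 with rfl | hv0
  · have hQ0 : Q 0 = 0 := by simpa using hQ 0 0
    simp [hQ0]
  set w := ‖v‖⁻¹ • v
  have hw : w ∈ Metric.sphere (0 : E) 1 ∩ p := ⟨by simp [w, norm_smul, hv0], p.smul_mem _ hv⟩
  have hQv : Q v = ‖v‖ ^ 2 * Q w := by rw [← hQ, smul_inv_smul₀ (norm_ne_zero_iff.2 hv0)]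
  rw [hQv, mul_comm c, mul_comm C]
  exact ⟨by gcongr; exact hcK w hw, by gcongr; exact hCK ⟨w, hw, rfl⟩⟩

theorem eventually_norm_iterate_le_mul_norm (p : Submodule ℝ E) {T : E → E}
    (hT : MapsTo T p p) (hQc : Continuous Q) (hQ : ∀ (t : ℝ) v, Q (t • v) = t ^ 2 * Q v)
    (hpos : ∀ v ∈ p, v ≠ 0 → 0 < Q v) {r : ℝ} (hr₀ : 0 ≤ r) (hr₁ : r < 1)
    (hQT : ∀ v ∈ p, Q (T v) = r * Q v) {ε : ℝ} (hε : 0 < ε) :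
    ∀ᶠ n in atTop, ∀ v ∈ p, ‖T^[n] v‖ ≤ ε * ‖v‖ := by
  obtain ⟨c, hc, C, hbounds⟩ := exists_mul_norm_sq_le_and_le_mul_norm_sq p hQc hQ hpos
  have hlim : Tendsto (fun n ↦ C * r ^ n) atTop (𝓝 0) := by
    simpa using (tendsto_pow_atTop_nhds_zero_of_lt_one hr₀ hr₁).const_mul C
  filter_upwards [hlim.eventually (eventually_le_nhds (by positivity : 0 < c * ε ^ 2))]
    with n hn v hv
  have hsq : c * ‖T^[n] v‖ ^ 2 ≤ c * (ε * ‖v‖) ^ 2 := calc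
    c * ‖T^[n] v‖ ^ 2 ≤ Q (T^[n] v) := (hbounds _ (hT.iterate n hv)).1
    _ = r ^ n * Q v := apply_iterate_eq_pow_mul hT hQT n hv
    _ ≤ r ^ n * (C * ‖v‖ ^ 2) := by gcongr; exact (hbounds v hv).2
    _ = C * r ^ n * ‖v‖ ^ 2 := by ring
    _ ≤ c * ε ^ 2 * ‖v‖ ^ 2 := by gcongr
    _ = c * (ε * ‖v‖) ^ 2 := by ring
  exact (pow_le_pow_iff_left₀ (norm_nonneg _) (by positivity) two_ne_zero).1
    (le_of_mul_le_mul_left hsq hc)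

end AdaptedForm

section Invariance

variable {K V : Type*} [Field K] [AddCommGroup V] [Module K V]

theorem map_ker_eq_of_comp_eq_smul {T : V →ₗ[K] V} (hT : Function.Surjective T)
    {f : V →ₗ[K] K} {c : K} (hc : c ≠ 0) (hfT : f ∘ₗ T = c • f) :
    (LinearMap.ker f).map T = LinearMap.ker f := by
  have hfT' (v : V) : f (T v) = c * f v := LinearMap.congr_fun hfT v
  refine le_antisymm (Submodule.map_le_iff_le_comap.2 fun v hv ↦ ?_) fun v hv ↦ ?_
  · simp_all
  · obtain ⟨w, rfl⟩ := hT v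
    refine ⟨w, ?_, rfl⟩
    simpa [hfT', hc] using hv

theorem map_span_singleton_eq_of_apply_eq_smul {T : V →ₗ[K] V} {u : V} {c : K} (hc : c ≠ 0)
    (hTu : T u = c • u) : (K ∙ u).map T = K ∙ u := by
  rw [Submodule.map_span, Set.image_singleton, hTu,
    Submodule.span_singleton_smul_eq (isUnit_iff_ne_zero.2 hc)]

end Invariance

local notation "ℝ³" => EuclideanSpace ℝ (Fin 3)

theorem TA_apply (v : ℝ³) : TA v = !₂[v 0 + v 1, v 2, v 0] := by
  ext i
  fin_cases i <;> simp [TA, Areal, Matrix.toLpLin_apply, dotProduct, Fin.sum_univ_three]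

theorem TA_injective : Function.Injective TA := by
  rw [← LinearMap.ker_eq_bot, LinearMap.ker_eq_bot']
  intro v hv
  have h (i : Fin 3) : TA v i = 0 := by simp [hv]
  have h0 := h 0
  have h1 := h 1
  have h2 := h 2
  simp only [TA_apply, Matrix.cons_val_zero, Matrix.cons_val_one, Matrix.cons_val] at h0 h1 h2
  ext i
  fin_cases i <;> simp <;> linarith

noncomputable def TAEquiv : ℝ³ ≃ₗ[ℝ] ℝ³ := LinearEquiv.ofInjectiveEndo TA TA_injective

theorem exists_one_lt_pow_three_eq_sq_add_one : ∃ L : ℝ, 1 < L ∧ L ^ 3 = L ^ 2 + 1 := by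
  have hc : ContinuousOn (fun x : ℝ ↦ x ^ 3 - x ^ 2 - 1) (Icc 1 2) := by fun_prop
  obtain ⟨L, hL, hL0⟩ :=
    intermediate_value_Ioo (by norm_num) hc (by norm_num : (0 : ℝ) ∈ Ioo _ _)
  exact ⟨L, hL.1, by linarith [hL0]⟩

noncomputable def stableFunctional (L : ℝ) : ℝ³ →ₗ[ℝ] ℝ := innerₛₗ ℝ !₂[L ^ 2, L, 1]

theorem stableFunctional_apply (L : ℝ) (v : ℝ³) :
    stableFunctional L v = L ^ 2 * v 0 + L * v 1 + v 2 := by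
  simp only [stableFunctional, innerₛₗ_apply_apply, PiLp.inner_apply, RCLike.inner_apply,
    Real.ringHom_apply, Fin.sum_univ_three, Matrix.cons_val_zero, Matrix.cons_val_one,
    Matrix.cons_val]
  ring

noncomputable def unstableVector (L : ℝ) : ℝ³ := !₂[L ^ 2, 1, L]

theorem unstableVector_ne_zero (L : ℝ) : unstableVector L ≠ 0 := by
  intro h
  simpa [unstableVector] using congr_arg (· 1) h

/-- Up to the factor `-4 / L²`, this is `v ↦ det (v, A v, unstableVector L)`, which `A` multiplies
by `det A / L = 1 / L`. -/
def stableQuadForm (L : ℝ) (v : ℝ³) : ℝ :=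
  ((1 - L ^ 2) * v 0 + (1 - L) * v 1 + 2 * v 2) ^ 2 +
    (3 * L ^ 2 - 2 * L - 1) * ((1 - L) * v 0 + v 1) ^ 2

section Eigenvalue

variable {L : ℝ}

theorem stableFunctional_comp_TA (hL : L ^ 3 = L ^ 2 + 1) :
    stableFunctional L ∘ₗ TA = L • stableFunctional L := by
  ext v
  simp only [LinearMap.comp_apply, LinearMap.smul_apply, stableFunctional_apply, TA_apply,
    smul_eq_mul, Matrix.cons_val_zero, Matrix.cons_val_one, Matrix.cons_val]
  linear_combination -(v 0) * hL

theorem TA_unstableVector (hL : L ^ 3 = L ^ 2 + 1) :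
    TA (unstableVector L) = L • unstableVector L := by
  ext i
  fin_cases i <;> simp [TA_apply, unstableVector, sq]
  linear_combination -hL

theorem stableFunctional_unstableVector_ne_zero (hL : 1 < L) :
    stableFunctional L (unstableVector L) ≠ 0 := by
  simp only [stableFunctional_apply, unstableVector, Matrix.cons_val_zero, Matrix.cons_val_one,
    Matrix.cons_val]
  positivity

theorem mul_stableQuadForm_TA (hL : L ^ 3 = L ^ 2 + 1) (v : ℝ³) :
    L * stableQuadForm L (TA v) = stableQuadForm L v := by
  simp only [stableQuadForm, TA_apply, Matrix.cons_val_zero, Matrix.cons_val_one, Matrix.cons_val]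
  linear_combination (4 * L ^ 2 * v 0 ^ 2 + 8 * L ^ 2 * v 0 * v 1 + 4 * L ^ 2 * v 1 ^ 2
    - 4 * L * v 0 * v 2 - 4 * L * v 1 * v 2 - 8 * L * v 0 ^ 2 - 8 * L * v 0 * v 1
    - 4 * L * v 1 ^ 2 + 4 * v 0 * v 2 + 4 * v 1 * v 2 + 4 * v 2 ^ 2) * hL

theorem stableQuadForm_pos (hL : 1 < L) {v : ℝ³} (hv : v ∈ LinearMap.ker (stableFunctional L))
    (hv0 : v ≠ 0) : 0 < stableQuadForm L v := by
  rw [LinearMap.mem_ker, stableFunctional_apply] at hv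
  have hk : 0 < 3 * L ^ 2 - 2 * L - 1 := by nlinarith
  refine lt_of_le_of_ne (by unfold stableQuadForm; positivity) fun h ↦ hv0 ?_
  obtain ⟨hp, hq⟩ := (add_eq_zero_iff_of_nonneg (sq_nonneg _)
    (mul_nonneg hk.le (sq_nonneg _))).1 h.symm
  rw [sq_eq_zero_iff] at hp
  rw [mul_eq_zero, sq_eq_zero_iff, or_iff_right hk.ne'] at hq
  have hx : v 0 = 0 := by
    have : 2 * L * (3 * L - 2) * v 0 = 0 := by
      linear_combination -hp + 2 * hv + (1 - 3 * L) * hq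
    simpa [show 2 * L * (3 * L - 2) ≠ 0 by nlinarith] using this
  have hy : v 1 = 0 := by linear_combination hq - (1 - L) * hx
  have hz : v 2 = 0 := by linear_combination hv - L ^ 2 * hx - L * hy
  ext i
  fin_cases i <;> simp [hx, hy, hz]

theorem finrank_ker_stableFunctional (hL : 1 < L) :
    Module.finrank ℝ (LinearMap.ker (stableFunctional L)) = 2 := by
  have h := Module.Dual.finrank_ker_add_one_of_ne_zero (f := stableFunctional L)
    fun h ↦ stableFunctional_unstableVector_ne_zero hL (by simp [h])
  rw [finrank_euclideanSpace_fin] at h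
  omega

theorem isCompl_ker_stableFunctional_span_unstableVector (hL : 1 < L) :
    IsCompl (LinearMap.ker (stableFunctional L)) (ℝ ∙ unstableVector L) :=
  ⟨Submodule.disjoint_span_singleton_of_notMem (stableFunctional_unstableVector_ne_zero hL),
    codisjoint_iff.2 (sup_comm (ℝ ∙ unstableVector L) _ ▸
      LinearMap.span_singleton_sup_ker_eq_top _ (stableFunctional_unstableVector_ne_zero hL))⟩

theorem eventually_norm_TA_pow_le (hL : 1 < L) (hL3 : L ^ 3 = L ^ 2 + 1) {ε : ℝ}
    (hε : 0 < ε) :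
    ∀ᶠ N in atTop, ∀ v ∈ LinearMap.ker (stableFunctional L), ‖(TA ^ N) v‖ ≤ ε * ‖v‖ := by
  have hmaps : MapsTo TA (LinearMap.ker (stableFunctional L))
      (LinearMap.ker (stableFunctional L)) := fun v hv ↦ by
    have := LinearMap.congr_fun (stableFunctional_comp_TA hL3) v
    simp_all
  simpa only [Module.End.pow_apply] using eventually_norm_iterate_le_mul_norm _ hmaps
    (Q := stableQuadForm L) (by unfold stableQuadForm; fun_prop)
    (fun t v ↦ by simp only [stableQuadForm, PiLp.smul_apply, smul_eq_mul]; ring)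
    (fun v hv hv0 ↦ stableQuadForm_pos hL hv hv0) (inv_nonneg.2 (by positivity))
    (inv_lt_one_of_one_lt₀ hL)
    (fun v _ ↦ by rw [← mul_stableQuadForm_TA hL3 v, inv_mul_cancel_left₀ (by positivity)]) hε

theorem TAEquiv_symm_unstableVector (hL : L ^ 3 = L ^ 2 + 1) :
    TAEquiv.symm (unstableVector L) = L⁻¹ • unstableVector L := by
  have hL0 : L ≠ 0 := by rintro rfl; norm_num at hL
  rw [LinearEquiv.symm_apply_eq, map_smul]
  change _ = L⁻¹ • TA (unstableVector L)
  rw [TA_unstableVector hL, inv_smul_smul₀ hL0]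

theorem eventually_norm_TAEquiv_symm_pow_le (hL : 1 < L) (hL3 : L ^ 3 = L ^ 2 + 1) {ε : ℝ}
    (hε : 0 < ε) :
    ∀ᶠ N in atTop, ∀ v ∈ ℝ ∙ unstableVector L,
      ‖((TAEquiv.symm : ℝ³ →ₗ[ℝ] ℝ³) ^ N) v‖ ≤ ε * ‖v‖ := by
  have hS : ∀ v ∈ ℝ ∙ unstableVector L, TAEquiv.symm v = L⁻¹ • v := by
    intro v hv
    obtain ⟨c, rfl⟩ := Submodule.mem_span_singleton.1 hv
    rw [map_smul, TAEquiv_symm_unstableVector hL3, smul_comm]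
  have hnorm (t : ℝ) (v : ℝ³) : ‖t • v‖ ^ 2 = t ^ 2 * ‖v‖ ^ 2 := by
    rw [norm_smul, mul_pow, Real.norm_eq_abs, sq_abs]
  simpa only [Module.End.pow_apply, LinearEquiv.coe_coe] using
    eventually_norm_iterate_le_mul_norm _ (T := TAEquiv.symm) (Q := fun v ↦ ‖v‖ ^ 2)
      (fun v hv ↦ by rw [hS v hv]; exact Submodule.smul_mem _ _ hv) (by fun_prop) hnorm
      (fun v _ hv0 ↦ by positivity) (sq_nonneg L⁻¹)
      (by rw [inv_pow]; exact inv_lt_one_of_one_lt₀ (one_lt_pow₀ hL two_ne_zero))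
      (fun v hv ↦ by rw [hS v hv, hnorm]) hε

end Eigenvalue

/-- After passing to an iterate, the Anosov matrix `A` contracts the stable subspace and
(backwards) the unstable subspace at rate at most `1/3`: there exist `N ≥ 1` and
`A`-invariant subspaces `E^s`, `E^u` of dimensions `2` and `1` with
`E^s ∩ E^u = {0}`, `E^s + E^u = ℝ³`, such that `‖A^N v‖ ≤ (1/3)‖v‖` on `E^s` and
`‖A^(−N) v‖ ≤ (1/3)‖v‖` on `E^u` (the inverse being a two-sided linear inverse `S`). -/
theorem anosov_iterate_contracts_by_one_third :
    ∃ (N : ℕ) (Es Eu : Submodule ℝ (EuclideanSpace ℝ (Fin 3)))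
      (S : EuclideanSpace ℝ (Fin 3) →ₗ[ℝ] EuclideanSpace ℝ (Fin 3)),
      1 ≤ N ∧
      Module.finrank ℝ Es = 2 ∧ Module.finrank ℝ Eu = 1 ∧
      Es.map TA = Es ∧ Eu.map TA = Eu ∧
      Es ⊓ Eu = ⊥ ∧ Es ⊔ Eu = ⊤ ∧
      S ∘ₗ TA = LinearMap.id ∧ TA ∘ₗ S = LinearMap.id ∧
      (∀ v ∈ Es, ‖(TA ^ N) v‖ ≤ (1 / 3 : ℝ) * ‖v‖) ∧
      (∀ v ∈ Eu, ‖(S ^ N) v‖ ≤ (1 / 3 : ℝ) * ‖v‖) := by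
  obtain ⟨L, hL, hL3⟩ := exists_one_lt_pow_three_eq_sq_add_one
  have hL0 : L ≠ 0 := (zero_lt_one.trans hL).ne'
  have hcompl := isCompl_ker_stableFunctional_span_unstableVector hL
  obtain ⟨N, hN, hs, hu⟩ := ((eventually_ge_atTop 1).and
    ((eventually_norm_TA_pow_le hL hL3 (by norm_num : (0 : ℝ) < 1 / 3)).and
      (eventually_norm_TAEquiv_symm_pow_le hL hL3 (by norm_num : (0 : ℝ) < 1 / 3)))).exists
  exact ⟨N, LinearMap.ker (stableFunctional L), ℝ ∙ unstableVector L, TAEquiv.symm, hN,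
    finrank_ker_stableFunctional hL, finrank_span_singleton (unstableVector_ne_zero L),
    map_ker_eq_of_comp_eq_smul (LinearMap.injective_iff_surjective.1 TA_injective) hL0
      (stableFunctional_comp_TA hL3),
    map_span_singleton_eq_of_apply_eq_smul hL0 (TA_unstableVector hL3),
    hcompl.inf_eq_bot, hcompl.sup_eq_top,
    LinearEquiv.ofInjectiveEndo_left_inv TA TA_injective,
    LinearEquiv.ofInjectiveEndo_right_inv TA TA_injective, hs, hu⟩
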